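/- There exists a rank function from closed modal μ-calculus formulas to the natural numbers satisfying: rank(p) = rank(p̄) = 1; rank(φ) = rank(ψ) whenever φ →* ψ and ψ →* φ; and rank(φ) > rank(ψ) whenever φ →* ψ but not ψ →* φ. -/

import Mathlib

/-- Formulas of the modal μ-calculus, with propositions, negated propositions
and variables indexed by natural numbers. -/
inductive Formula : Type
  | prop : ℕ → Formula
  | nprop : ℕ → Formula
  | var : ℕ → Formula
  | or : Formula → Formula → Formula
  | and : Formula → Formula → Formula
  | dia : Formula → Formula
  | box : Formula → Formula
  | mu : ℕ → Formula → Formula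
  | nu : ℕ → Formula → Formula

/-- Negation of a modal μ-calculus formula. -/
def Formula.neg : Formula → Formula
  | .prop p => .nprop p
  | .nprop p => .prop p
  | .var x => .var x
  | .or φ ψ => .and φ.neg ψ.neg
  | .and φ ψ => .or φ.neg ψ.neg
  | .dia φ => .box φ.neg
  | .box φ => .dia φ.neg
  | .mu x φ => .nu x φ.neg
  | .nu x φ => .mu x φ.neg

/-- `x` occurs free in a formula. -/
def Formula.FreeIn (x : ℕ) : Formula → Prop
  | .prop _ => False
  | .nprop _ => False
  | .var y => y = x
  | .or φ ψ => φ.FreeIn x ∨ ψ.FreeIn x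
  | .and φ ψ => φ.FreeIn x ∨ ψ.FreeIn x
  | .dia φ => φ.FreeIn x
  | .box φ => φ.FreeIn x
  | .mu y φ => y ≠ x ∧ φ.FreeIn x
  | .nu y φ => y ≠ x ∧ φ.FreeIn x

/-- `x` has a free occurrence lying within the scope of a ν-operator. -/
def Formula.FreeUnderNu (x : ℕ) : Formula → Prop
  | .prop _ => False
  | .nprop _ => False
  | .var _ => False
  | .or φ ψ => φ.FreeUnderNu x ∨ ψ.FreeUnderNu x
  | .and φ ψ => φ.FreeUnderNu x ∨ ψ.FreeUnderNu x
  | .dia φ => φ.FreeUnderNu x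
  | .box φ => φ.FreeUnderNu x
  | .mu y φ => y ≠ x ∧ φ.FreeUnderNu x
  | .nu y φ => y ≠ x ∧ φ.FreeIn x

/-- `x` has a free occurrence lying within the scope of a μ-operator. -/
def Formula.FreeUnderMu (x : ℕ) : Formula → Prop
  | .prop _ => False
  | .nprop _ => False
  | .var _ => False
  | .or φ ψ => φ.FreeUnderMu x ∨ ψ.FreeUnderMu x
  | .and φ ψ => φ.FreeUnderMu x ∨ ψ.FreeUnderMu x
  | .dia φ => φ.FreeUnderMu x
  | .box φ => φ.FreeUnderMu x
  | .mu y φ => y ≠ x ∧ φ.FreeIn x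
  | .nu y φ => y ≠ x ∧ φ.FreeUnderMu x

/-- The (syntactic) subformula relation. -/
inductive Subformula : Formula → Formula → Prop
  | refl (φ) : Subformula φ φ
  | orL {χ φ ψ} : Subformula χ φ → Subformula χ (.or φ ψ)
  | orR {χ φ ψ} : Subformula χ ψ → Subformula χ (.or φ ψ)
  | andL {χ φ ψ} : Subformula χ φ → Subformula χ (.and φ ψ)
  | andR {χ φ ψ} : Subformula χ ψ → Subformula χ (.and φ ψ)
  | dia {χ φ} : Subformula χ φ → Subformula χ (.dia φ)
  | box {χ φ} : Subformula χ φ → Subformula χ (.box φ)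
  | mu {χ φ} (x) : Subformula χ φ → Subformula χ (.mu x φ)
  | nu {χ φ} (x) : Subformula χ φ → Subformula χ (.nu x φ)

/-- A formula is alternation-free if for every subformula `μx.ψ` no free
occurrence of `x` in `ψ` is in the scope of a ν-operator, and dually. -/
def AlternationFree (φ : Formula) : Prop :=
  (∀ x ψ, Subformula (.mu x ψ) φ → ¬ ψ.FreeUnderNu x) ∧
  (∀ x ψ, Subformula (.nu x ψ) φ → ¬ ψ.FreeUnderMu x)

/-- Substitution of `δ` for the free occurrences of the variable `x`. -/
def Formula.subst (x : ℕ) (δ : Formula) : Formula → Formula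
  | .prop p => .prop p
  | .nprop p => .nprop p
  | .var y => if y = x then δ else .var y
  | .or φ ψ => .or (Formula.subst x δ φ) (Formula.subst x δ ψ)
  | .and φ ψ => .and (Formula.subst x δ φ) (Formula.subst x δ ψ)
  | .dia φ => .dia (Formula.subst x δ φ)
  | .box φ => .box (Formula.subst x δ φ)
  | .mu y φ => if y = x then .mu y φ else .mu y (Formula.subst x δ φ)
  | .nu y φ => if y = x then .nu y φ else .nu y (Formula.subst x δ φ)

/-- The trace-step relation: passing to a direct Boolean or modal subformula,
or unfolding a fixpoint formula. -/
inductive TraceStep : Formula → Formula → Prop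
  | orL (φ ψ) : TraceStep (.or φ ψ) φ
  | orR (φ ψ) : TraceStep (.or φ ψ) ψ
  | andL (φ ψ) : TraceStep (.and φ ψ) φ
  | andR (φ ψ) : TraceStep (.and φ ψ) ψ
  | dia (φ) : TraceStep (.dia φ) φ
  | box (φ) : TraceStep (.box φ) φ
  | mu (x φ) : TraceStep (.mu x φ) (Formula.subst x (.mu x φ) φ)
  | nu (x φ) : TraceStep (.nu x φ) (Formula.subst x (.nu x φ) φ)

/-- The trace relation: reflexive-transitive closure of the trace-step
relation. -/
def Trace : Formula → Formula → Prop := Relation.ReflTransGen TraceStep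

/-- A formula is closed if it has no free variables. -/
def Formula.Closed (φ : Formula) : Prop := ∀ x, ¬ φ.FreeIn x

/-- Every free occurrence of `x` in the formula is in the scope of a
modality. -/
def Formula.GuardedIn (x : ℕ) : Formula → Prop
  | .prop _ => True
  | .nprop _ => True
  | .var y => y ≠ x
  | .or φ ψ => φ.GuardedIn x ∧ ψ.GuardedIn x
  | .and φ ψ => φ.GuardedIn x ∧ ψ.GuardedIn x
  | .dia _ => True
  | .box _ => True
  | .mu y φ => y = x ∨ φ.GuardedIn x
  | .nu y φ => y = x ∨ φ.GuardedIn x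

/-- A formula is guarded if every bound variable is guarded inside its
binder. -/
def Formula.Guarded (φ : Formula) : Prop :=
  (∀ x ψ, Subformula (.mu x ψ) φ → ψ.GuardedIn x) ∧
  (∀ x ψ, Subformula (.nu x ψ) φ → ψ.GuardedIn x)

/-! The rank of `φ` is the number of formulas reachable from `φ` by traces. Trace-equivalent
formulas reach the same formulas, and a strict trace `φ →* ψ` loses at least `φ` itself, so the
only issue is finiteness. For closed `φ` every formula reachable by traces is an instance of a
subformula of `φ` under one of finitely many environments of closed formulas (Fischer–Ladner). -/

deriving instance DecidableEq for Formula

namespace Formula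

theorem subst_eq_self_of_not_freeIn {x : ℕ} {δ φ : Formula} (h : ¬ φ.FreeIn x) :
    subst x δ φ = φ := by
  induction φ with
  | prop | nprop => rfl
  | var y => simp_all [FreeIn, subst]
  | or _ _ iha ihb | and _ _ iha ihb =>
      simp only [FreeIn, not_or] at h
      simp [subst, iha h.1, ihb h.2]
  | dia _ ih | box _ ih => simp [subst, ih h]
  | mu y _ ih | nu y _ ih =>
      by_cases hyx : y = x
      · simp [subst, hyx]
      · simp only [FreeIn, ne_eq, hyx, not_false_eq_true, true_and] at h
        simp [subst, hyx, ih h]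

theorem freeIn_of_freeIn_subst {x y : ℕ} {δ φ : Formula} (h : (subst x δ φ).FreeIn y) :
    φ.FreeIn y ∧ y ≠ x ∨ δ.FreeIn y := by
  induction φ with
  | prop | nprop => exact h.elim
  | var z =>
      by_cases hzx : z = x
      · simp_all [subst]
      · simp only [subst, hzx, if_false, FreeIn] at h
        exact .inl ⟨h, h ▸ hzx⟩
  | or a b iha ihb | and a b iha ihb =>
      rcases h with h | h
      · exact (iha h).imp_left (And.imp_left .inl)
      · exact (ihb h).imp_left (And.imp_left .inr)
  | dia _ ih | box _ ih => exact ih h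
  | mu z a ih | nu z a ih =>
      by_cases hzx : z = x
      · simp only [subst, hzx, if_true, FreeIn] at h
        exact .inl ⟨⟨hzx ▸ h.1, h.2⟩, fun hyx => h.1 hyx.symm⟩
      · simp only [subst, hzx, if_false, FreeIn] at h
        exact (ih h.2).imp_left (And.imp_left (⟨h.1, ·⟩))

/-- Apply the substitutions of an environment, the last entry first. -/
def substList (σ : List (ℕ × Formula)) (φ : Formula) : Formula :=
  σ.foldr (fun p ψ => subst p.1 p.2 ψ) φ

section substList

variable {σ : List (ℕ × Formula)}

@[simp]
theorem substList_cons (p : ℕ × Formula) (σ : List (ℕ × Formula)) (φ : Formula) :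
    substList (p :: σ) φ = subst p.1 p.2 (substList σ φ) := rfl

@[simp]
theorem substList_prop (p : ℕ) : substList σ (prop p) = prop p := by
  induction σ <;> simp_all [substList, subst]

@[simp]
theorem substList_nprop (p : ℕ) : substList σ (nprop p) = nprop p := by
  induction σ <;> simp_all [substList, subst]

@[simp]
theorem substList_or (φ ψ : Formula) :
    substList σ (or φ ψ) = or (substList σ φ) (substList σ ψ) := by
  induction σ <;> simp_all [substList, subst]

@[simp]
theorem substList_and (φ ψ : Formula) :
    substList σ (and φ ψ) = and (substList σ φ) (substList σ ψ) := by
  induction σ <;> simp_all [substList, subst]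

@[simp]
theorem substList_dia (φ : Formula) : substList σ (dia φ) = dia (substList σ φ) := by
  induction σ <;> simp_all [substList, subst]

@[simp]
theorem substList_box (φ : Formula) : substList σ (box φ) = box (substList σ φ) := by
  induction σ <;> simp_all [substList, subst]

theorem substList_mu (x : ℕ) (φ : Formula) :
    substList σ (mu x φ) = mu x (substList (σ.filter (·.1 ≠ x)) φ) := by
  induction σ with
  | nil => rfl
  | cons p σ ih =>
      rw [substList_cons, ih]
      by_cases h : p.1 = x
      · simp [subst, h]
      · simp [subst, h, Ne.symm h]

theorem substList_nu (x : ℕ) (φ : Formula) :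
    substList σ (nu x φ) = nu x (substList (σ.filter (·.1 ≠ x)) φ) := by
  induction σ with
  | nil => rfl
  | cons p σ ih =>
      rw [substList_cons, ih]
      by_cases h : p.1 = x
      · simp [subst, h]
      · simp [subst, h, Ne.symm h]

theorem substList_var (hσ : ∀ p ∈ σ, p.2.Closed) (y : ℕ) :
    substList σ (var y) = var y ∨ ∃ p ∈ σ, substList σ (var y) = p.2 := by
  induction σ with
  | nil => exact .inl rfl
  | cons p σ ih =>
      rw [List.forall_mem_cons] at hσ
      rcases ih hσ.2 with h | ⟨q, hq, h⟩
      · by_cases hy : y = p.1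
        · exact .inr ⟨p, List.mem_cons_self, by rw [substList_cons, h, hy]; simp [subst]⟩
        · exact .inl (by simp [h, subst, hy])
      · refine .inr ⟨q, List.mem_cons_of_mem _ hq, ?_⟩
        rw [substList_cons, h, subst_eq_self_of_not_freeIn (hσ.2 q hq _)]

theorem freeIn_of_freeIn_substList (hσ : ∀ p ∈ σ, p.2.Closed) {φ : Formula} {y : ℕ}
    (h : (substList σ φ).FreeIn y) : φ.FreeIn y ∧ y ∉ σ.map Prod.fst := by
  induction σ with
  | nil => exact ⟨h, List.not_mem_nil⟩
  | cons p σ ih =>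
      rw [List.forall_mem_cons] at hσ
      rcases freeIn_of_freeIn_subst h with ⟨h, hyp⟩ | h
      · obtain ⟨hφ, hy⟩ := ih hσ.2 h
        simp_all
      · exact (hσ.1 y h).elim

theorem closed_substList (hσ : ∀ p ∈ σ, p.2.Closed) {φ : Formula}
    (hφ : ∀ y, φ.FreeIn y → y ∈ σ.map Prod.fst) : (substList σ φ).Closed :=
  fun y h => (freeIn_of_freeIn_substList hσ h).2 (hφ y (freeIn_of_freeIn_substList hσ h).1)

end substList

/-- The instances, under the environments met on the way down, of the subformulas of `φ`:
when passing into `μx.ρ` the environment records that `x` now stands for the whole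
(substituted) fixpoint formula. -/
def flClosure : Formula → List (ℕ × Formula) → Finset Formula
  | .prop p, σ => {substList σ (.prop p)}
  | .nprop p, σ => {substList σ (.nprop p)}
  | .var y, σ => {substList σ (.var y)}
  | .or φ ψ, σ => insert (substList σ (.or φ ψ)) (flClosure φ σ ∪ flClosure ψ σ)
  | .and φ ψ, σ => insert (substList σ (.and φ ψ)) (flClosure φ σ ∪ flClosure ψ σ)
  | .dia φ, σ => insert (substList σ (.dia φ)) (flClosure φ σ)
  | .box φ, σ => insert (substList σ (.box φ)) (flClosure φ σ)
  | .mu x φ, σ => insert (substList σ (.mu x φ))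
      (flClosure φ ((x, substList σ (.mu x φ)) :: σ.filter (·.1 ≠ x)))
  | .nu x φ, σ => insert (substList σ (.nu x φ))
      (flClosure φ ((x, substList σ (.nu x φ)) :: σ.filter (·.1 ≠ x)))

section flClosure

variable {σ : List (ℕ × Formula)} {χ : Formula}

theorem substList_mem_flClosure (φ : Formula) (σ : List (ℕ × Formula)) :
    substList σ φ ∈ flClosure φ σ := by
  cases φ <;> simp [flClosure]

theorem traceStep_substList (hσ : ∀ p ∈ σ, p.2.Closed) {φ : Formula}
    (h : TraceStep (substList σ φ) χ) : χ ∈ flClosure φ σ ∨ ∃ p ∈ σ, TraceStep p.2 χ := by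
  cases φ with
  | prop | nprop => simp only [substList_prop, substList_nprop] at h; cases h
  | var y =>
      rcases substList_var hσ y with e | ⟨p, hp, e⟩ <;> rw [e] at h
      · cases h
      · exact .inr ⟨p, hp, h⟩
  | or a b | and a b =>
      simp only [substList_or, substList_and] at h
      cases h <;> simp [flClosure, substList_mem_flClosure]
  | dia a | box a =>
      simp only [substList_dia, substList_box] at h
      cases h; simp [flClosure, substList_mem_flClosure]
  | mu x a | nu x a =>
      -- by `substList_mu`, the unfolding is literally `substList` of the extended environment
      simp only [substList_mu, substList_nu] at h
      cases h
      simp only [flClosure, substList_mu, substList_nu]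
      exact .inl (Finset.mem_insert_of_mem (substList_mem_flClosure a _))

theorem traceStep_mem_flClosure {φ χ' : Formula} (hσ : ∀ p ∈ σ, p.2.Closed)
    (hφ : ∀ y, φ.FreeIn y → y ∈ σ.map Prod.fst) (hχ : χ ∈ flClosure φ σ) (h : TraceStep χ χ') :
    χ' ∈ flClosure φ σ ∨ ∃ p ∈ σ, TraceStep p.2 χ' := by
  induction φ generalizing σ χ with
  | prop | nprop | var =>
      rw [flClosure, Finset.mem_singleton] at hχ
      subst hχ
      exact traceStep_substList hσ h
  | or a b iha ihb | and a b iha ihb =>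
      simp only [flClosure, Finset.mem_insert, Finset.mem_union] at hχ ⊢
      rcases hχ with rfl | hχ | hχ
      · simpa [flClosure] using traceStep_substList hσ h
      · exact (iha hσ (fun y hy => hφ y (.inl hy)) hχ h).imp_left (.inr ∘ .inl)
      · exact (ihb hσ (fun y hy => hφ y (.inr hy)) hχ h).imp_left (.inr ∘ .inr)
  | dia a ih | box a ih =>
      simp only [flClosure, Finset.mem_insert] at hχ ⊢
      rcases hχ with rfl | hχ
      · simpa [flClosure] using traceStep_substList hσ h
      · exact (ih hσ hφ hχ h).imp_left .inr
  | mu x a ih | nu x a ih =>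
      simp only [flClosure, Finset.mem_insert] at hχ
      rcases hχ with rfl | hχ
      · exact traceStep_substList hσ h
      refine (ih ?_ ?_ hχ h).elim (.inl ∘ Finset.mem_insert_of_mem) fun ⟨p, hp, hp'⟩ => ?_
      · simp only [List.forall_mem_cons, List.mem_filter]
        exact ⟨closed_substList hσ hφ, fun p hp => hσ p hp.1⟩
      · intro y hy
        by_cases hyx : y = x
        · simp [hyx]
        · obtain ⟨p, hp, rfl⟩ := List.mem_map.1 (hφ y ⟨Ne.symm hyx, hy⟩)
          refine List.mem_cons_of_mem _ (List.mem_map_of_mem (List.mem_filter.2 ⟨hp, ?_⟩))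
          simpa using hyx
      · rcases List.mem_cons.1 hp with rfl | hp
        · exact traceStep_substList hσ hp'
        · exact .inr ⟨p, (List.mem_filter.1 hp).1, hp'⟩

end flClosure

theorem mem_flClosure_of_trace {φ ψ : Formula} (hφ : φ.Closed) (h : Trace φ ψ) :
    ψ ∈ flClosure φ [] := by
  induction h with
  | refl => exact substList_mem_flClosure φ []
  | tail _ hstep ih =>
      simpa using traceStep_mem_flClosure (by simp) (fun y hy => (hφ y hy).elim) ih hstep

theorem finite_setOf_trace {φ : Formula} (hφ : φ.Closed) : {ψ | Trace φ ψ}.Finite :=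
  (flClosure φ []).finite_toSet.subset fun _ => mem_flClosure_of_trace hφ

end Formula

/-- `Set.ncard` is `0` on infinite sets; for closed `φ` the set is finite. -/
noncomputable def traceRank (φ : Formula) : ℕ := {ψ | Trace φ ψ}.ncard

section traceRank

variable {φ ψ : Formula}

theorem traceRank_eq_one_of_forall_not_traceStep (h : ∀ ψ, ¬ TraceStep φ ψ) : traceRank φ = 1 := by
  have hreach : {ψ | Trace φ ψ} = {φ} := by
    ext ψ
    refine ⟨fun hψ => ?_, fun hψ => hψ ▸ Relation.ReflTransGen.refl⟩
    rcases Relation.ReflTransGen.cases_head hψ with rfl | ⟨χ, hχ, -⟩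
    · rfl
    · exact (h χ hχ).elim
  rw [traceRank, hreach, Set.ncard_singleton]

theorem traceRank_eq_of_trace (h₁ : Trace φ ψ) (h₂ : Trace ψ φ) : traceRank φ = traceRank ψ :=
  congrArg Set.ncard (Set.ext fun _ => ⟨h₂.trans, h₁.trans⟩)

theorem traceRank_lt_of_trace (hφ : φ.Closed) (h₁ : Trace φ ψ) (h₂ : ¬ Trace ψ φ) :
    traceRank ψ < traceRank φ :=
  Set.ncard_lt_ncard ⟨fun _ => h₁.trans, fun h => h₂ (h Relation.ReflTransGen.refl)⟩
    (Formula.finite_setOf_trace hφ)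

end traceRank

/-- There is a rank function on (closed, guarded) formulas with `rank(p) =
rank(p̄) = 1`, invariance under trace-equivalence and strict decrease along
strict traces. -/
theorem exists_rank :
    ∃ rank : Formula → ℕ,
      (∀ p : ℕ, rank (.prop p) = 1) ∧
      (∀ p : ℕ, rank (.nprop p) = 1) ∧
      (∀ φ ψ : Formula, φ.Closed → φ.Guarded →
        Trace φ ψ → Trace ψ φ → rank φ = rank ψ) ∧
      (∀ φ ψ : Formula, φ.Closed → φ.Guarded →
        Trace φ ψ → ¬ Trace ψ φ → rank ψ < rank φ) :=
  ⟨traceRank, fun _ => traceRank_eq_one_of_forall_not_traceStep nofun,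
    fun _ => traceRank_eq_one_of_forall_not_traceStep nofun,
    fun _ _ _ _ => traceRank_eq_of_trace, fun _ _ hφ _ => traceRank_lt_of_trace hφ⟩
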